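/- arXiv:2512.12600 — 3 statements merged into one kernel-verified Lean document; each statement's English description precedes it below -/
import Mathlib

section
/- Let q₁, …, q_m ∈ ℝⁿ be nonzero vectors and r₁, …, r_m ∈ ℝ satisfy r_i/|q_i| + r_j/|q_j| ≤ 0 for all i ≠ j. Define u_s = Σᵢ (q_i/|q_i|²)·min{−r_i, 0}. Then q_jᵀ u_s + r_j ≤ 0 for every j = 1, …, m. -/
/-!
Put `s_i = r_i / ‖q_i‖`. By Cauchy–Schwarz the summand of index `i`
raises `q_jᵀu + r_j` by at most `‖q_j‖ max(s_i, 0)`, while the summand of index `j` turns `r_j`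
into `‖q_j‖ min(s_j, 0)`. As `s_i + s_k ≤ 0` for `i ≠ k`, at most one `s_k` is positive, and
then `s_k + min(s_j, 0) ≤ s_k + s_j ≤ 0` when `k ≠ j`.
-/

open Finset RealInnerProductSpace

section Halfspace

variable {E : Type*} [NormedAddCommGroup E] [InnerProductSpace ℝ E]

/-- The point of least norm of the halfspace `{u | ⟪y, u⟫ + r ≤ 0}`, for `y ≠ 0`. -/
noncomputable def halfspaceMinNormPoint (y : E) (r : ℝ) : E :=
  (min (-r) 0 / ‖y‖ ^ 2) • y

theorem inner_halfspaceMinNormPoint_le (x y : E) (r : ℝ) :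
    ⟪x, halfspaceMinNormPoint y r⟫ ≤ ‖x‖ * max (r / ‖y‖) 0 := by
  rcases eq_or_ne y 0 with rfl | hy
  · simp [halfspaceMinNormPoint]
  have hy : 0 < ‖y‖ := norm_pos_iff.mpr hy
  have hcs : -(‖x‖ * ‖y‖) ≤ ⟪x, y⟫ := neg_le_of_abs_le (abs_real_inner_le_norm x y)
  have hmax : max (r / ‖y‖) 0 = max r 0 / ‖y‖ := by
    rw [← max_div_div_right hy.le, zero_div]
  have hcoef : min (-r) 0 = -max r 0 := by rw [← min_neg_neg, neg_zero]
  rw [halfspaceMinNormPoint, real_inner_smul_right, hcoef, hmax]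
  calc -max r 0 / ‖y‖ ^ 2 * ⟪x, y⟫
      ≤ -max r 0 / ‖y‖ ^ 2 * -(‖x‖ * ‖y‖) :=
        mul_le_mul_of_nonpos_left hcs (div_nonpos_of_nonpos_of_nonneg (by simp) (by positivity))
    _ = ‖x‖ * (max r 0 / ‖y‖) := by field_simp

theorem inner_self_halfspaceMinNormPoint_add {y : E} (hy : y ≠ 0) (r : ℝ) :
    ⟪y, halfspaceMinNormPoint y r⟫ + r = ‖y‖ * min (r / ‖y‖) 0 := by
  have hy : 0 < ‖y‖ := norm_pos_iff.mpr hy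
  rw [halfspaceMinNormPoint, real_inner_smul_right, real_inner_self_eq_norm_sq,
    div_mul_cancel₀ _ (by positivity), mul_min_of_nonneg _ _ hy.le, mul_div_cancel₀ _ hy.ne',
    mul_zero, min_add, neg_add_cancel, zero_add, min_comm]

end Halfspace

theorem sum_erase_max_add_min_nonpos {ι : Type*} [Fintype ι] [DecidableEq ι] {s : ι → ℝ}
    (hs : ∀ i j, i ≠ j → s i + s j ≤ 0) (j : ι) :
    ∑ i ∈ univ.erase j, max (s i) 0 + min (s j) 0 ≤ 0 := by
  by_cases h : ∃ k ≠ j, 0 < s k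
  · obtain ⟨k, hkj, hk⟩ := h
    have hrest : ∀ i ∈ univ.erase j, i ≠ k → max (s i) 0 = 0 := fun i _ hik =>
      max_eq_right (by linarith [hs i k hik])
    rw [sum_eq_single_of_mem k (mem_erase.mpr ⟨hkj, mem_univ k⟩) hrest, max_eq_left hk.le]
    linarith [min_le_left (s j) 0, hs k j hkj]
  · push Not at h
    rw [sum_eq_zero fun i hi => max_eq_right (h i (ne_of_mem_erase hi))]
    simp

theorem stmt2_general {n m : ℕ} (q : Fin m → EuclideanSpace ℝ (Fin n))
    (r : Fin m → ℝ) (hq : ∀ i, q i ≠ 0)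
    (hr : ∀ i j, i ≠ j → r i / ‖q i‖ + r j / ‖q j‖ ≤ 0) :
    ∀ j, (inner ℝ (q j) (∑ i, (min (-(r i)) 0 / ‖q i‖ ^ 2) • q i) : ℝ) + r j ≤ 0 := by
  intro j
  change ⟪q j, ∑ i, halfspaceMinNormPoint (q i) (r i)⟫ + r j ≤ 0
  rw [inner_sum, ← add_sum_erase _ _ (mem_univ j)]
  calc ⟪q j, halfspaceMinNormPoint (q j) (r j)⟫
        + ∑ i ∈ univ.erase j, ⟪q j, halfspaceMinNormPoint (q i) (r i)⟫ + r j
      ≤ ‖q j‖ * min (r j / ‖q j‖) 0 + ∑ i ∈ univ.erase j, ‖q j‖ * max (r i / ‖q i‖) 0 := by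
        rw [add_right_comm, inner_self_halfspaceMinNormPoint_add (hq j)]
        gcongr with i
        exact inner_halfspaceMinNormPoint_le _ _ _
    _ = ‖q j‖ * (∑ i ∈ univ.erase j, max (r i / ‖q i‖) 0 + min (r j / ‖q j‖) 0) := by
        rw [mul_add, mul_sum, add_comm]
    _ ≤ 0 := mul_nonpos_of_nonneg_of_nonpos (norm_nonneg _)
        (sum_erase_max_add_min_nonpos (s := fun i => r i / ‖q i‖) hr j)

theorem stmt2 {n m : ℕ} (hm : 1 ≤ m) (q : Fin m → EuclideanSpace ℝ (Fin n))
    (r : Fin m → ℝ) (hq : ∀ i, q i ≠ 0)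
    (hr : ∀ i j, i ≠ j → r i / ‖q i‖ + r j / ‖q j‖ ≤ 0) :
    ∀ j, (inner ℝ (q j) (∑ i, (min (-(r i)) 0 / ‖q i‖ ^ 2) • q i) : ℝ) + r j ≤ 0 :=
  stmt2_general q r hq hr
end

section
/- Suppose A_L ∈ ℝ^{m×n} has unit-norm rows and let c_A ∈ (0,1). Let A ∈ ℝⁿ be a unit vector such that there exist an index set I ⊆ {1,…,m} with |I| = n and a nonnegative vector k ∈ ℝⁿ satisfying kᵀ[A_L]_I = Aᵀ and [A_L]_I A ≥ c_A·𝟙 componentwise. Define [φ(b,A)]_i = c_A b + b·max([A_L A]_i − c_A, 0) + k_φ max(c_A − [A_L A]_i, 0) with b ≥ 0, k_φ > 0. If b' ∈ ℝ^m satisfies b' ≤ φ(b, A) componentwise, then {u : A_L(u − u_s) ≤ b'} ⊆ {u : Aᵀ(u − u_s) ≤ b}. -/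
/-!
On the selected rows `e i` the constraint `[A_L A]_i ≥ c_A` makes both `max` terms of `φ` collapse,
so `φ(b, A)` equals `b [A_L A]_i` there. Since `A = kᵀ [A_L]_I` with `k ≥ 0`, the nonnegative
combination `k` of the selected constraints `[A_L (u - u_s)]_{e i} ≤ b [A_L A]_{e i}` reads
`A ⬝ᵥ (u - u_s) ≤ b (A ⬝ᵥ A) = b`.
-/

open Matrix

variable {R : Type*}

/-- The paper's `[φ(b, A)]_i`, as a function of `x = [A_L A]_i`. -/
def phi [Ring R] [Max R] (c kφ b x : R) : R :=
  c * b + b * max (x - c) 0 + kφ * max (c - x) 0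

theorem phi_of_le [CommRing R] [LinearOrder R] [IsOrderedRing R] {c x : R} (kφ b : R)
    (h : c ≤ x) : phi c kφ b x = b * x := by
  rw [phi, max_eq_left (sub_nonneg.2 h), max_eq_right (sub_nonpos.2 h)]
  ring

theorem dotProduct_eq_dotProduct_mulVec_comp [NonUnitalSemiring R] {ι κ μ : Type*}
    [Fintype ι] [Fintype κ] (M : Matrix μ κ R) (e : ι → μ) (k : ι → R) {a : κ → R}
    (ha : ∀ j, ∑ i, k i * M (e i) j = a j) (v : κ → R) :
    a ⬝ᵥ v = k ⬝ᵥ ((M *ᵥ v) ∘ e) := by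
  obtain rfl : a = k ᵥ* M.submatrix e id := funext fun j => (ha j).symm
  rw [← dotProduct_mulVec]
  rfl

theorem stmt7_general {m n : ℕ} (A_L : Matrix (Fin m) (Fin n) ℝ)
    (c_A k_φ b : ℝ)
    (A : Fin n → ℝ) (hA : A ⬝ᵥ A = 1) (u_s : Fin n → ℝ)
    (e : Fin n → Fin m)
    (k : Fin n → ℝ) (hk : ∀ i, 0 ≤ k i)
    (hkA : ∀ j, ∑ i, k i * A_L (e i) j = A j)
    (hgeq : ∀ i, c_A ≤ A_L.mulVec A (e i))
    (b' : Fin m → ℝ)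
    (hb' : ∀ i, b' i ≤ c_A * b + b * max (A_L.mulVec A i - c_A) 0
        + k_φ * max (c_A - A_L.mulVec A i) 0) :
    {u : Fin n → ℝ | ∀ i, A_L.mulVec (u - u_s) i ≤ b' i} ⊆
      {u : Fin n → ℝ | A ⬝ᵥ (u - u_s) ≤ b} := by
  intro u hu
  have hsel : (A_L *ᵥ (u - u_s)) ∘ e ≤ b • ((A_L *ᵥ A) ∘ e) := fun i =>
    (hu (e i)).trans <| (hb' (e i)).trans_eq <| phi_of_le k_φ b (hgeq i)
  calc A ⬝ᵥ (u - u_s) = k ⬝ᵥ ((A_L *ᵥ (u - u_s)) ∘ e) :=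
        dotProduct_eq_dotProduct_mulVec_comp A_L e k hkA _
    _ ≤ k ⬝ᵥ (b • ((A_L *ᵥ A) ∘ e)) := dotProduct_le_dotProduct_of_nonneg_left hsel hk
    _ = b * (A ⬝ᵥ A) := by
        rw [dotProduct_smul, dotProduct_eq_dotProduct_mulVec_comp A_L e k hkA, smul_eq_mul]
    _ = b := by rw [hA, mul_one]

theorem stmt7 {m n : ℕ} (A_L : Matrix (Fin m) (Fin n) ℝ)
    (hrows : ∀ i, A_L i ⬝ᵥ A_L i = 1)
    (c_A k_φ b : ℝ) (hcA : 0 < c_A) (hcA1 : c_A < 1) (hkφ : 0 < k_φ) (hb : 0 ≤ b)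
    (A : Fin n → ℝ) (hA : A ⬝ᵥ A = 1) (u_s : Fin n → ℝ)
    (e : Fin n → Fin m) (he : Function.Injective e)
    (k : Fin n → ℝ) (hk : ∀ i, 0 ≤ k i)
    (hkA : ∀ j, ∑ i, k i * A_L (e i) j = A j)
    (hgeq : ∀ i, c_A ≤ A_L.mulVec A (e i))
    (b' : Fin m → ℝ)
    (hb' : ∀ i, b' i ≤ c_A * b + b * max (A_L.mulVec A i - c_A) 0
        + k_φ * max (c_A - A_L.mulVec A i) 0) :
    {u : Fin n → ℝ | ∀ i, A_L.mulVec (u - u_s) i ≤ b' i} ⊆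
      {u : Fin n → ℝ | A ⬝ᵥ (u - u_s) ≤ b} :=
  stmt7_general A_L c_A k_φ b A hA u_s e k hk hkA hgeq b' hb'
end

section
/- Let g_i : ℝⁿ → ℝ, i = 1,…,m, be differentiable convex functions. Then ⋂ᵢ {u : g_i(u) ≤ 0} = ⋂ᵢ ⋂_{ν ∈ ℝⁿ} {u : g_i(ν) + ∇g_i(ν)·(u − ν) ≤ 0}. -/
open Set

/-- Along the line `t ↦ x + t • (y - x)` the function is convex in `t`, and the one-variable
first-order inequality at `t = 0` gives the claim. -/
theorem ConvexOn.add_fderiv_sub_le {E : Type*} [NormedAddCommGroup E] [NormedSpace ℝ E]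
    {s : Set E} {f : E → ℝ} {f' : E →L[ℝ] ℝ} {x y : E} (hf : ConvexOn ℝ s f)
    (hx : x ∈ s) (hy : y ∈ s) (hf' : HasFDerivAt f f' x) :
    f x + f' (y - x) ≤ f y := by
  let line : ℝ →ᵃ[ℝ] E :=
    AffineMap.const ℝ ℝ x + (LinearMap.toSpanSingleton ℝ E (y - x)).toAffineMap
  have line_apply (t : ℝ) : line t = x + t • (y - x) := rfl
  have line_zero : line 0 = x := by simp [line_apply]
  have line_one : line 1 = y := by simp [line_apply]
  have hconv : ConvexOn ℝ (line ⁻¹' s) (f ∘ line) := hf.comp_affineMap line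
  have hderiv : HasDerivAt (f ∘ line) (f' (y - x)) 0 := by
    have hline : HasDerivAt line (y - x) 0 := by simpa [line] using line.hasDerivAt
    exact (line_zero ▸ hf').comp_hasDerivAt 0 hline
  have hslope := hconv.le_slope_of_hasDerivAt (by simpa [line_zero] using hx)
    (by simpa [line_one] using hy) one_pos hderiv
  rw [slope_def_field, Function.comp_apply, Function.comp_apply, line_zero, line_one] at hslope
  linarith

theorem ConvexOn.add_inner_gradient_sub_le {E : Type*} [NormedAddCommGroup E]
    [InnerProductSpace ℝ E] [CompleteSpace E] {s : Set E} {f : E → ℝ} {x y : E}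
    (hf : ConvexOn ℝ s f) (hx : x ∈ s) (hy : y ∈ s) (hdiff : DifferentiableAt ℝ f x) :
    f x + inner ℝ (gradient f x) (y - x) ≤ f y := by
  simpa using hf.add_fderiv_sub_le hx hy (hasGradientAt_iff_hasFDerivAt.mp hdiff.hasGradientAt)

theorem stmt19 {n m : ℕ} (g : Fin m → EuclideanSpace ℝ (Fin n) → ℝ)
    (hconv : ∀ i, ConvexOn ℝ Set.univ (g i)) (hdiff : ∀ i, Differentiable ℝ (g i)) :
    (⋂ i, {u | g i u ≤ 0}) =
      ⋂ i, ⋂ ν : EuclideanSpace ℝ (Fin n),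
        {u | g i ν + (inner ℝ (gradient (g i) ν) (u - ν) : ℝ) ≤ 0} := by
  ext u
  simp only [mem_iInter, mem_ofPred_eq]
  constructor
  · intro hu i ν
    exact ((hconv i).add_inner_gradient_sub_le (mem_univ ν) (mem_univ u) (hdiff i ν)).trans (hu i)
  · intro hu i
    simpa using hu i u
end
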